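/- For fixed x > 0, the function k ↦ x/log(1 + x/k) − k is strictly increasing on [1, ∞), takes values in (0, x), and tends to x/2 as k → ∞. -/

import Mathlib

open Filter Real Set Topology

/-! With `logMean a b = (b - a) / (log b - log a)` the logarithmic mean, `x / log (1 + x / k)`
is `logMean k (k + x)`. The classical chain `√(a b) < logMean a b < (a + b) / 2` (the left
inequality is `y < sinh y` for `y = log √(b / a)`, the right one the first term of the series of
`log (1 + 1 / a)`) squeezes `x / log (1 + x / k) - k` between `√(k (k + x)) - k`, which tends to
`x / 2`, and `x / 2`. The derivative of that function is `logMean² / (k (k + x)) - 1`, positive by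
the same left inequality. -/

namespace Real

lemma two_mul_log_lt_sub_inv {u : ℝ} (hu : 1 < u) : 2 * log u < u - u⁻¹ := by
  have h := self_lt_sinh_iff.mpr (log_pos hu)
  rw [sinh_log (by linarith)] at h
  linarith

lemma two_div_two_mul_add_one_lt_log_one_add_inv {a : ℝ} (ha : 0 < a) :
    2 / (2 * a + 1) < log (1 + a⁻¹) := by
  have h := lt_hasSum (hasSum_log_one_add_inv ha) 0 (fun _ _ ↦ by positivity) 1 one_ne_zero
    (by positivity)
  simpa [div_eq_mul_inv] using h

noncomputable def logMean (a b : ℝ) : ℝ := (b - a) / (log b - log a)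

variable {a b : ℝ}

lemma sqrt_mul_lt_logMean (ha : 0 < a) (hab : a < b) : √(a * b) < logMean a b := by
  have hb : 0 < b := ha.trans hab
  have hlog : 0 < log b - log a := sub_pos.mpr (log_lt_log ha hab)
  set u := √b / √a with hu_def
  have hu : 1 < u := by
    rw [one_lt_div (sqrt_pos.mpr ha)]
    exact sqrt_lt_sqrt ha.le hab
  have hlog_u : log b - log a = 2 * log u := by
    rw [log_div (sqrt_pos.mpr hb).ne' (sqrt_pos.mpr ha).ne', log_sqrt ha.le, log_sqrt hb.le]
    ring
  have hsub_u : b - a = √(a * b) * (u - u⁻¹) := by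
    rw [sqrt_mul ha.le, hu_def]
    field_simp
    rw [sq_sqrt ha.le, sq_sqrt hb.le]
  rw [logMean, lt_div_iff₀ hlog, hlog_u, hsub_u]
  exact mul_lt_mul_of_pos_left (two_mul_log_lt_sub_inv hu) (sqrt_pos.mpr (mul_pos ha hb))

lemma logMean_lt_add_div_two (ha : 0 < a) (hab : a < b) : logMean a b < (a + b) / 2 := by
  have hba : 0 < b - a := sub_pos.mpr hab
  have hlog : 0 < log b - log a := sub_pos.mpr (log_lt_log ha hab)
  have h := two_div_two_mul_add_one_lt_log_one_add_inv (div_pos ha hba)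
  have hrat : 1 + (a / (b - a))⁻¹ = b / a := by field_simp; ring
  rw [hrat, log_div (ha.trans hab).ne' ha.ne', div_lt_iff₀ (by positivity)] at h
  rw [logMean, div_lt_iff₀ hlog]
  field_simp at h
  linarith

end Real

section

variable {x k : ℝ}

lemma div_log_one_add_div_eq_logMean (hk : 0 < k) (hkx : 0 < k + x) :
    x / log (1 + x / k) = logMean k (k + x) := by
  rw [logMean, ← log_div hkx.ne' hk.ne', add_sub_cancel_left]
  congr 2
  field_simp

lemma div_log_one_add_div_mem_Ioo (hx : 0 < x) (hk : 0 < k) :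
    x / log (1 + x / k) ∈ Ioo √(k * (k + x)) (k + x / 2) := by
  have hkx : k < k + x := lt_add_of_pos_right k hx
  rw [div_log_one_add_div_eq_logMean hk (hk.trans hkx)]
  refine ⟨sqrt_mul_lt_logMean hk hkx, ?_⟩
  linarith [logMean_lt_add_div_two hk hkx]

lemma hasDerivAt_div_log_one_add_div (hx : 0 < x) (hk : 0 < k) :
    HasDerivAt (fun k ↦ x / log (1 + x / k)) ((x / log (1 + x / k)) ^ 2 / (k * (k + x))) k := by
  have h1 : 0 < 1 + x / k := by positivity
  have hlog : 0 < log (1 + x / k) := log_pos (by simp only [lt_add_iff_pos_right]; positivity)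
  have hinner : HasDerivAt (fun k ↦ 1 + x / k) (-(x / k ^ 2)) k := by
    simpa [div_eq_mul_inv] using ((hasDerivAt_inv hk.ne').const_mul x).const_add 1
  refine ((hasDerivAt_const k x).div (hinner.log h1.ne') hlog.ne').congr_deriv ?_
  field_simp
  ring

lemma strictMonoOn_div_log_one_add_div_sub (hx : 0 < x) :
    StrictMonoOn (fun k ↦ x / log (1 + x / k) - k) (Ioi 0) := by
  have hderiv (k : ℝ) (hk : 0 < k) : HasDerivAt (fun k ↦ x / log (1 + x / k) - k)
      ((x / log (1 + x / k)) ^ 2 / (k * (k + x)) - 1) k :=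
    (hasDerivAt_div_log_one_add_div hx hk).sub (hasDerivAt_id k)
  refine strictMonoOn_of_deriv_pos (convex_Ioi 0)
    (fun k hk ↦ (hderiv k hk).continuousAt.continuousWithinAt) fun k hk ↦ ?_
  replace hk : 0 < k := by rwa [interior_Ioi] at hk
  rw [(hderiv k hk).deriv, sub_pos, one_lt_div (by positivity)]
  calc k * (k + x) = √(k * (k + x)) ^ 2 := (sq_sqrt (by positivity)).symm
    _ < (x / log (1 + x / k)) ^ 2 := by
      gcongr
      exact (div_log_one_add_div_mem_Ioo hx hk).1

lemma tendsto_sqrt_mul_add_sub_atTop (x : ℝ) :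
    Tendsto (fun k ↦ √(k * (k + x)) - k) atTop (𝓝 (x / 2)) := by
  have hcont : ContinuousAt (fun t ↦ x / (√(1 + t) + 1)) 0 :=
    continuousAt_const.div (by fun_prop) (by positivity)
  have h0 : Tendsto (fun k : ℝ ↦ x / k) atTop (𝓝 0) :=
    tendsto_const_nhds.div_atTop tendsto_id
  have hlim := hcont.tendsto.comp h0
  rw [add_zero, sqrt_one, one_add_one_eq_two] at hlim
  refine hlim.congr' ?_
  filter_upwards [eventually_gt_atTop |x|] with k hk
  have hk0 : 0 < k := (abs_nonneg x).trans_lt hk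
  have ht : -1 < x / k := by
    rw [lt_div_iff₀ hk0]
    linarith [neg_abs_le x]
  have hs := sq_sqrt (by linarith : 0 ≤ 1 + x / k)
  have hsqrt : √(k * (k + x)) = k * √(1 + x / k) := by
    rw [show k * (k + x) = k ^ 2 * (1 + x / k) by field_simp, sqrt_mul (sq_nonneg k),
      sqrt_sq hk0.le]
  rw [Function.comp_apply, hsqrt, div_eq_iff (by positivity)]
  have hkt : x = k * (x / k) := by field_simp
  linear_combination (-k) * hs + hkt

lemma div_log_one_add_div_sub_mem_Ioo (hx : 0 < x) (hk : 0 < k) :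
    x / log (1 + x / k) - k ∈ Ioo 0 (x / 2) := by
  obtain ⟨hlow, hupp⟩ := div_log_one_add_div_mem_Ioo hx hk
  have hk_lt : k < √(k * (k + x)) := (lt_sqrt hk.le).mpr (by nlinarith)
  constructor <;> linarith

end

theorem stmt_19 (x : ℝ) (hx : 0 < x) :
    StrictMonoOn (fun k : ℝ => x / Real.log (1 + x/k) - k) (Set.Ici 1) ∧
    (∀ k : ℝ, 1 ≤ k → (x / Real.log (1 + x/k) - k) ∈ Set.Ioo 0 x) ∧
    Tendsto (fun k : ℝ => x / Real.log (1 + x/k) - k) atTop (nhds (x/2)) := by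
  have hpos {k : ℝ} (hk : 1 ≤ k) : 0 < k := zero_lt_one.trans_le hk
  refine ⟨(strictMonoOn_div_log_one_add_div_sub hx).mono fun k hk ↦ hpos hk, fun k hk ↦
    Ioo_subset_Ioo_right (half_le_self hx.le) (div_log_one_add_div_sub_mem_Ioo hx (hpos hk)), ?_⟩
  refine tendsto_of_tendsto_of_tendsto_of_le_of_le' (tendsto_sqrt_mul_add_sub_atTop x)
    tendsto_const_nhds ?_ ?_ <;> filter_upwards [eventually_gt_atTop 0] with k hk
  · linarith [(div_log_one_add_div_mem_Ioo hx hk).1]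
  · exact (div_log_one_add_div_sub_mem_Ioo hx hk).2.le
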